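/- Let k, l ≥ 1 with n = k + l ≥ 2. In the braid group B_n, the square of the superselection braid satisfies β_n² = t_{l,k} · r_l(β_k)² · β_l² · t_{k,l}, where moreover r_l(β_k)² and β_l² commute. -/

import Mathlib

/-!
Formalization of identities in the Artin braid group `B_m`.

We encode "the identity `w₁ = w₂` holds in the braid group `B_m`" via the universal
property of the presented group: it holds in `B_m` iff for every group `G` and every
assignment `σ : ℕ → G` of the generators `σ_1, …, σ_{m-1}` satisfying the defining
braid relations of `B_m`, the corresponding products in `G` are equal.

Braid words are recorded as lists of (1-based) generator indices; `wordProd σ w`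
is the corresponding product.  The anti-automorphism `χ` (which fixes each
generator and reverses the order of the letters of a word) corresponds to
`List.reverse` on words, and the shift homomorphism `r_a : σ_i ↦ σ_{i+a}`
corresponds to `rWord a` on words.
-/

namespace Braid

variable {G : Type*} [Group G]

/-- The product in `G` of the braid word `w` (a list of 1-based generator indices). -/
def wordProd (σ : ℕ → G) (w : List ℕ) : G := (w.map σ).prod

/-- `σ 1, …, σ (m-1)` satisfy the defining relations of the Artin braid group `B_m`:
`σ_i σ_{i+1} σ_i = σ_{i+1} σ_i σ_{i+1}` for `1 ≤ i ≤ m-2`, and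
`σ_i σ_j = σ_j σ_i` for `|i - j| ≥ 2`, `1 ≤ i, j ≤ m-1`. -/
def IsBraidRep (m : ℕ) (σ : ℕ → G) : Prop :=
  (∀ i, 1 ≤ i → i + 2 ≤ m → σ i * σ (i + 1) * σ i = σ (i + 1) * σ i * σ (i + 1)) ∧
  (∀ i j, 1 ≤ i → i + 2 ≤ j → j + 1 ≤ m → σ i * σ j = σ j * σ i)

/-- The word `[1, 2, …, j]` representing `b_j = σ_1 σ_2 ⋯ σ_j` (with `b_0 = e`). -/
def bWord (j : ℕ) : List ℕ := List.range' 1 j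

/-- The word representing the superselection braid `β_n = b_{n-1} b_{n-2} ⋯ b_1`
(with `β_1 = β_0 = e`). -/
def betaWord : ℕ → List ℕ
  | 0 => []
  | n + 1 => bWord n ++ betaWord n

/-- The shift `r_a : σ_i ↦ σ_{i+a}` on braid words. -/
def rWord (a : ℕ) (w : List ℕ) : List ℕ := w.map (· + a)

/-- The word representing `t_{k,l} = r_0(χ(b_l)) · r_1(χ(b_l)) ⋯ r_{k-1}(χ(b_l))`,
the braid clockwise exchanging a block of `k` strands with a block of `l` strands. -/
def tWord : ℕ → ℕ → List ℕ
  | 0, _ => []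
  | k + 1, l => tWord k l ++ rWord k (bWord l).reverse

/-! basic word product lemmas -/

@[simp] lemma wordProd_nil (σ : ℕ → G) : wordProd σ [] = 1 := rfl

@[simp] lemma wordProd_cons (σ : ℕ → G) (x : ℕ) (w : List ℕ) :
    wordProd σ (x :: w) = σ x * wordProd σ w := by
  simp [wordProd]

@[simp] lemma wordProd_append (σ : ℕ → G) (w₁ w₂ : List ℕ) :
    wordProd σ (w₁ ++ w₂) = wordProd σ w₁ * wordProd σ w₂ := by
  simp [wordProd]

@[simp] lemma wordProd_singleton (σ : ℕ → G) (x : ℕ) : wordProd σ [x] = σ x := by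
  simp [wordProd]

lemma wordProd_map (σ : ℕ → G) (f : ℕ → ℕ) (w : List ℕ) :
    wordProd σ (w.map f) = wordProd (fun i => σ (f i)) w := by
  simp [wordProd, List.map_map]; rfl

lemma wordProd_rWord (σ : ℕ → G) (a : ℕ) (w : List ℕ) :
    wordProd σ (rWord a w) = wordProd (fun i => σ (i + a)) w :=
  wordProd_map σ _ w

lemma rWord_append (a : ℕ) (w₁ w₂ : List ℕ) :
    rWord a (w₁ ++ w₂) = rWord a w₁ ++ rWord a w₂ := by simp [rWord]

@[simp] lemma rWord_zero (w : List ℕ) : rWord 0 w = w := by simp [rWord]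

lemma bWord_succ (j : ℕ) : bWord (j + 1) = bWord j ++ [j + 1] := by
  simp [bWord, List.range'_concat, Nat.add_comm]

lemma bWord_cons (j : ℕ) : bWord (j + 1) = 1 :: rWord 1 (bWord j) := by
  have : rWord 1 (bWord j) = List.range' 2 j := by
    simp [rWord, bWord]
    induction j with
    | zero => simp
    | succ j ih => simp [List.range'_concat, ih]; omega
  rw [this, bWord]
  exact List.range'_succ (s := 1) (n := j) (step := 1)

lemma bWord_split (a b : ℕ) : bWord (a + b) = bWord a ++ rWord a (bWord b) := by
  have : rWord a (bWord b) = List.range' (1 + a) b := by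
    simp [rWord, bWord]
    induction b with
    | zero => simp
    | succ b ih => simp [List.range'_concat, ih]; omega
  rw [this, bWord, bWord]
  have := List.range'_append (s := 1) (m := a) (n := b) (step := 1)
  simp only [one_mul] at this
  exact this.symm

lemma mem_bWord {x j : ℕ} (hx : x ∈ bWord j) : 1 ≤ x ∧ x ≤ j := by
  simp [bWord, List.mem_range'_1] at hx; omega

lemma mem_betaWord {x m : ℕ} (hx : x ∈ betaWord m) : 1 ≤ x ∧ x + 1 ≤ m := by
  induction m with
  | zero => simp [betaWord] at hx
  | succ m ih =>
    simp only [betaWord, List.mem_append] at hx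
    rcases hx with hx | hx
    · have := mem_bWord hx; omega
    · have := ih hx; omega

/-! commutation lemmas -/

lemma commLetter {σ : ℕ → G} {w : List ℕ} {g : G}
    (hc : ∀ x ∈ w, σ x * g = g * σ x) :
    wordProd σ w * g = g * wordProd σ w := by
  induction w with
  | nil => simp
  | cons x w ih =>
    have h1 : σ x * g = g * σ x := hc x (by simp)
    have h2 := ih (fun x hx => hc x (by simp [hx]))
    simp only [wordProd_cons, mul_assoc, h2]
    rw [← mul_assoc, ← mul_assoc, h1]

lemma commProd {σ : ℕ → G} {w₁ w₂ : List ℕ}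
    (hc : ∀ x ∈ w₁, ∀ y ∈ w₂, σ x * σ y = σ y * σ x) :
    wordProd σ w₁ * wordProd σ w₂ = wordProd σ w₂ * wordProd σ w₁ := by
  induction w₂ with
  | nil => simp
  | cons y w₂ ih =>
    have h1 : wordProd σ w₁ * σ y = σ y * wordProd σ w₁ :=
      commLetter (fun x hx => hc x hx y (by simp))
    have h2 := ih (fun x hx y' hy' => hc x hx y' (by simp [hy']))
    simp only [wordProd_cons, ← mul_assoc, h1]
    rw [mul_assoc, h2, mul_assoc]

/-! shifted representations -/

lemma isBraidRep_shift {n : ℕ} {σ : ℕ → G} (h : IsBraidRep n σ) (a : ℕ) :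
    IsBraidRep (n - a) (fun i => σ (i + a)) := by
  constructor
  · intro i hi hin
    have : i + a + 1 = i + 1 + a := by omega
    simpa [this] using h.1 (i + a) (by omega) (by omega)
  · intro i j hi hij hjn
    exact h.2 (i + a) (j + a) (by omega) (by omega) (by omega)


/-! conjugation by b_m : shift up -/

lemma bConj {n : ℕ} {σ : ℕ → G} (h : IsBraidRep n σ) :
    ∀ m i : ℕ, 1 ≤ i → i + 1 ≤ m → m + 1 ≤ n →
    wordProd σ (bWord m) * σ i = σ (i + 1) * wordProd σ (bWord m) := by
  intro m
  induction m with
  | zero => intro i hi him hm; omega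
  | succ m ih =>
    intro i hi him hm
    rcases Nat.lt_or_ge i m with hlt | hge
    · -- i + 1 ≤ m
      rw [bWord_succ, wordProd_append, wordProd_singleton, mul_assoc,
        ← h.2 i (m + 1) hi (by omega) (by omega)]
      rw [← mul_assoc, ih i hi (by omega) (by omega), mul_assoc]
    · -- i = m
      have him' : i = m := by omega
      subst him'
      obtain ⟨m', rfl⟩ : ∃ m', i = m' + 1 := ⟨i - 1, by omega⟩
      have e1 : bWord (m' + 1 + 1) = bWord m' ++ [m' + 1, m' + 2] := by
        rw [bWord_succ, bWord_succ]; simp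
      rw [e1, wordProd_append]
      have hb : σ (m' + 1) * σ (m' + 2) * σ (m' + 1) =
          σ (m' + 2) * σ (m' + 1) * σ (m' + 2) := h.1 (m' + 1) (by omega) (by omega)
      have e2 : wordProd σ [m' + 1, m' + 2] * σ (m' + 1) =
          σ (m' + 2) * (wordProd σ [m' + 1, m' + 2]) := by
        simp only [wordProd_cons, wordProd_nil, mul_one, ← mul_assoc]
        rw [hb, mul_assoc]
      have e3 : wordProd σ (bWord m') * σ (m' + 2) = σ (m' + 2) * wordProd σ (bWord m') := by
        refine commLetter (fun x hx => ?_)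
        have := mem_bWord hx
        exact h.2 x (m' + 2) (by omega) (by omega) (by omega)
      rw [mul_assoc, e2, ← mul_assoc, e3, mul_assoc]

/-! conjugation by rev(b_m) : shift down -/

lemma bRevConj {n : ℕ} {σ : ℕ → G} (h : IsBraidRep n σ) :
    ∀ m i : ℕ, 1 ≤ i → i + 1 ≤ m → m + 1 ≤ n →
    wordProd σ (bWord m).reverse * σ (i + 1) = σ i * wordProd σ (bWord m).reverse := by
  intro m
  induction m with
  | zero => intro i hi him hm; omega
  | succ m ih =>
    intro i hi him hm
    have e0 : (bWord (m + 1)).reverse = (m + 1) :: (bWord m).reverse := by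
      rw [bWord_succ]; simp
    rcases Nat.lt_or_ge i m with hlt | hge
    · rw [e0, wordProd_cons, mul_assoc, ih i hi (by omega) (by omega), ← mul_assoc,
        (h.2 i (m + 1) hi (by omega) (by omega)).symm, mul_assoc]
    · have him' : i = m := by omega
      subst him'
      obtain ⟨m', rfl⟩ : ∃ m', i = m' + 1 := ⟨i - 1, by omega⟩
      have e1 : (bWord (m' + 1 + 1)).reverse = (m' + 2) :: (m' + 1) :: (bWord m').reverse := by
        rw [bWord_succ, bWord_succ]; simp
      have e3 : wordProd σ (bWord m').reverse * σ (m' + 2) =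
          σ (m' + 2) * wordProd σ (bWord m').reverse := by
        refine commLetter (fun x hx => ?_)
        have := mem_bWord (List.mem_reverse.mp hx)
        exact h.2 x (m' + 2) (by omega) (by omega) (by omega)
      have hb : σ (m' + 1) * σ (m' + 2) * σ (m' + 1) =
          σ (m' + 2) * σ (m' + 1) * σ (m' + 2) := h.1 (m' + 1) (by omega) (by omega)
      rw [e1]
      simp only [wordProd_cons]
      set Q := wordProd σ (bWord m').reverse with hQ
      calc σ (m' + 2) * (σ (m' + 1) * Q) * σ (m' + 1 + 1)
          = σ (m' + 2) * σ (m' + 1) * (Q * σ (m' + 2)) := by group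
        _ = σ (m' + 2) * σ (m' + 1) * (σ (m' + 2) * Q) := by rw [e3]
        _ = σ (m' + 2) * σ (m' + 1) * σ (m' + 2) * Q := by group
        _ = σ (m' + 1) * σ (m' + 2) * σ (m' + 1) * Q := by rw [← hb]
        _ = σ (m' + 1) * (σ (m' + 2) * (σ (m' + 1) * Q)) := by group

/-! β_{m+1} = b_m β_m = β_m rev(b_m) -/

lemma betaRev {n : ℕ} {σ : ℕ → G} (h : IsBraidRep n σ) :
    ∀ m : ℕ, m + 1 ≤ n →
    wordProd σ (betaWord m) * wordProd σ (bWord m).reverse =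
      wordProd σ (bWord m) * wordProd σ (betaWord m) := by
  intro m
  induction m with
  | zero => intro _; simp [betaWord, bWord]
  | succ m ih =>
    intro hm
    have e0 : (bWord (m + 1)).reverse = (m + 1) :: (bWord m).reverse := by
      rw [bWord_succ]; simp
    have ebeta : wordProd σ (betaWord (m + 1)) =
        wordProd σ (bWord m) * wordProd σ (betaWord m) := by
      show wordProd σ (bWord m ++ betaWord m) = _
      rw [wordProd_append]
    have hcomm : wordProd σ (betaWord m) * σ (m + 1) = σ (m + 1) * wordProd σ (betaWord m) := by
      refine commLetter (fun x hx => ?_)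
      have := mem_betaWord hx
      exact h.2 x (m + 1) (by omega) (by omega) (by omega)
    rw [ebeta, e0, wordProd_cons]
    calc wordProd σ (bWord m) * wordProd σ (betaWord m) *
          (σ (m + 1) * wordProd σ (bWord m).reverse)
        = wordProd σ (bWord m) * (wordProd σ (betaWord m) * σ (m + 1)) *
            wordProd σ (bWord m).reverse := by group
      _ = wordProd σ (bWord m) * (σ (m + 1) * wordProd σ (betaWord m)) *
            wordProd σ (bWord m).reverse := by rw [hcomm]
      _ = wordProd σ (bWord m) * σ (m + 1) *
            (wordProd σ (betaWord m) * wordProd σ (bWord m).reverse) := by group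
      _ = wordProd σ (bWord m) * σ (m + 1) *
            (wordProd σ (bWord m) * wordProd σ (betaWord m)) := by rw [ih (by omega)]
      _ = wordProd σ (bWord (m + 1)) * (wordProd σ (bWord m) * wordProd σ (betaWord m)) := by
            rw [bWord_succ, wordProd_append, wordProd_singleton]

/-! β_m σ_i = σ_{m-i} β_m -/

lemma betaConj {n : ℕ} {σ : ℕ → G} (h : IsBraidRep n σ) :
    ∀ m i : ℕ, 1 ≤ i → i + 1 ≤ m → m ≤ n →
    wordProd σ (betaWord m) * σ i = σ (m - i) * wordProd σ (betaWord m) := by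
  intro m
  induction m with
  | zero => intro i hi him hm; omega
  | succ m ih =>
    intro i hi him hm
    have ebeta : wordProd σ (betaWord (m + 1)) =
        wordProd σ (bWord m) * wordProd σ (betaWord m) := by
      show wordProd σ (bWord m ++ betaWord m) = _; rw [wordProd_append]
    rcases Nat.lt_or_ge i m with hlt | hge
    · rw [ebeta, mul_assoc, ih i hi (by omega) (by omega), ← mul_assoc,
        bConj h m (m - i) (by omega) (by omega) (by omega), mul_assoc,
        show m - i + 1 = m + 1 - i from by omega]
    · have him' : i = m := by omega
      subst him'
      rcases Nat.lt_or_ge i 2 with h1 | h2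
      · -- i = m = 1 : betaWord 2 = [1]
        have : i = 1 := by omega
        subst this
        show wordProd σ (betaWord 2) * σ 1 = σ (2 - 1) * wordProd σ (betaWord 2)
        have : betaWord 2 = [1] := rfl
        rw [this]; simp
      · -- m ≥ 2
        rw [show (i + 1 - i) = 1 from by omega, ebeta, ← betaRev h i (by omega)]
        obtain ⟨i', rfl⟩ : ∃ i', i = i' + 1 := ⟨i - 1, by omega⟩
        rw [mul_assoc, bRevConj h (i' + 1) i' (by omega) (by omega) (by omega),
          ← mul_assoc, ih i' (by omega) (by omega) (by omega),
          show (i' + 1 - i') = 1 from by omega, mul_assoc]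

/-! word versions -/

lemma bConjWord {n : ℕ} {σ : ℕ → G} (h : IsBraidRep n σ) {m : ℕ} (hm : m + 1 ≤ n)
    {w : List ℕ} (hw : ∀ x ∈ w, 1 ≤ x ∧ x + 1 ≤ m) :
    wordProd σ (bWord m) * wordProd σ w = wordProd σ (w.map (· + 1)) * wordProd σ (bWord m) := by
  induction w with
  | nil => simp
  | cons x w ih =>
    have hx := hw x (by simp)
    have ihw := ih (fun y hy => hw y (by simp [hy]))
    simp only [List.map_cons, wordProd_cons, ← mul_assoc,
      bConj h m x hx.1 hx.2 hm]
    rw [mul_assoc, ihw, ← mul_assoc]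

lemma betaConjWord {n : ℕ} {σ : ℕ → G} (h : IsBraidRep n σ) {m : ℕ} (hm : m ≤ n)
    {w : List ℕ} (hw : ∀ x ∈ w, 1 ≤ x ∧ x + 1 ≤ m) :
    wordProd σ (betaWord m) * wordProd σ w =
      wordProd σ (w.map (m - ·)) * wordProd σ (betaWord m) := by
  induction w with
  | nil => simp
  | cons x w ih =>
    have hx := hw x (by simp)
    have ihw := ih (fun y hy => hw y (by simp [hy]))
    simp only [List.map_cons, wordProd_cons, ← mul_assoc,
      betaConj h m x hx.1 hx.2 hm]
    rw [mul_assoc, ihw, ← mul_assoc]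


/-! flip of b-words -/

lemma bWord_rev_flip (j : ℕ) :
    ((bWord j).reverse).map (fun x => j + 1 - x) = bWord j := by
  induction j with
  | zero => simp [bWord]
  | succ j ih =>
    have e0 : (bWord (j + 1)).reverse = (j + 1) :: (bWord j).reverse := by
      rw [bWord_succ]; simp
    rw [e0, List.map_cons, show j + 1 + 1 - (j + 1) = 1 from by omega]
    have e1 : ((bWord j).reverse).map (fun x => j + 1 + 1 - x)
        = (((bWord j).reverse).map (fun x => j + 1 - x)).map (fun y => y + 1) := by
      rw [List.map_map]
      refine List.map_congr_left (fun x hx => ?_)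
      have := mem_bWord (List.mem_reverse.mp hx)
      simp only [Function.comp_apply]
      omega
    rw [e1, ih, bWord_cons]
    rfl

/-! the abstract group computation for the inductive step of lemma A -/

lemma abstractStep {B bm P Q' C D E R sm : G}
    (hBsig : B * sm = bm * B * P⁻¹)
    (hF1 : B * P = C * B)
    (hF2 : B * Q' = D * B)
    (hsplit : C = D * E)
    (hW1 : bm * E = R * bm) :
    bm * B = R * B * (sm * Q') := by
  have h1 : B * P⁻¹ = C⁻¹ * B := by
    calc B * P⁻¹ = C⁻¹ * (C * B) * P⁻¹ := by group
      _ = C⁻¹ * (B * P) * P⁻¹ := by rw [hF1]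
      _ = C⁻¹ * B := by group
  have h2 : R * bm * E⁻¹ = bm := by
    calc R * bm * E⁻¹ = bm * E * E⁻¹ := by rw [← hW1]
      _ = bm := by group
  calc bm * B = (R * bm * E⁻¹) * B := by rw [h2]
    _ = R * bm * ((D * E)⁻¹ * (D * B)) := by group
    _ = R * bm * (C⁻¹ * (B * Q')) := by rw [← hsplit, ← hF2]
    _ = R * bm * ((C⁻¹ * B) * Q') := by group
    _ = R * bm * ((B * P⁻¹) * Q') := by rw [h1]
    _ = R * (bm * B * P⁻¹) * Q' := by group
    _ = R * (B * sm) * Q' := by rw [← hBsig]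
    _ = R * B * (sm * Q') := by group

/-! the key inductive step: b_m β_m = r_l(b_k) β_m r_k(rev b_l), m = k + l -/

lemma keyStep {n : ℕ} {σ : ℕ → G} (h : IsBraidRep n σ) (k l' : ℕ)
    (hn : k + l' + 2 ≤ n) :
    wordProd σ (bWord (k + l' + 1)) * wordProd σ (betaWord (k + l' + 1)) =
      wordProd σ (rWord (l' + 1) (bWord k)) * wordProd σ (betaWord (k + l' + 1)) *
        wordProd σ (rWord k ((bWord (l' + 1)).reverse)) := by
  have hQsplit : wordProd σ (rWord k ((bWord (l' + 1)).reverse)) =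
      σ (k + l' + 1) * wordProd σ (rWord k ((bWord l').reverse)) := by
    have e : (bWord (l' + 1)).reverse = (l' + 1) :: (bWord l').reverse := by
      rw [bWord_succ]; simp
    rw [e]
    show wordProd σ ((l' + 1 + k) :: rWord k ((bWord l').reverse)) = _
    rw [wordProd_cons, show l' + 1 + k = k + l' + 1 from by omega]
  rw [hQsplit]
  refine abstractStep (P := wordProd σ ((bWord (k + l')).reverse))
    (C := wordProd σ (bWord (k + l'))) (D := wordProd σ (bWord l'))
    (E := wordProd σ (rWord l' (bWord k))) ?hBsig ?hF1 ?hF2 ?hsplit ?hW1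
  case hBsig =>
    have hrev : (bWord (k + l' + 1)).reverse =
        (k + l' + 1) :: (bWord (k + l')).reverse := by
      rw [bWord_succ]; simp
    have hbr := betaRev h (k + l' + 1) (by omega)
    rw [hrev, wordProd_cons] at hbr
    calc wordProd σ (betaWord (k + l' + 1)) * σ (k + l' + 1)
        = wordProd σ (betaWord (k + l' + 1)) *
            (σ (k + l' + 1) * wordProd σ ((bWord (k + l')).reverse)) *
            (wordProd σ ((bWord (k + l')).reverse))⁻¹ := by group
      _ = wordProd σ (bWord (k + l' + 1)) * wordProd σ (betaWord (k + l' + 1)) *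
            (wordProd σ ((bWord (k + l')).reverse))⁻¹ := by rw [hbr]
  case hF1 =>
    have hw : ∀ x ∈ (bWord (k + l')).reverse, 1 ≤ x ∧ x + 1 ≤ k + l' + 1 := by
      intro x hx
      have := mem_bWord (List.mem_reverse.mp hx)
      omega
    rw [betaConjWord h (m := k + l' + 1) (by omega) hw]
    congr 2
    exact bWord_rev_flip (k + l')
  case hF2 =>
    have hw : ∀ x ∈ rWord k ((bWord l').reverse), 1 ≤ x ∧ x + 1 ≤ k + l' + 1 := by
      intro x hx
      simp only [rWord, List.mem_map, List.mem_reverse] at hx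
      obtain ⟨y, hy, rfl⟩ := hx
      have := mem_bWord hy
      omega
    rw [betaConjWord h (m := k + l' + 1) (by omega) hw]
    congr 2
    rw [rWord, List.map_map]
    have e1 : ((bWord l').reverse).map ((fun x => k + l' + 1 - x) ∘ (· + k))
        = ((bWord l').reverse).map (fun x => l' + 1 - x) := by
      refine List.map_congr_left (fun x hx => ?_)
      simp only [Function.comp_apply]
      omega
    rw [e1, bWord_rev_flip]
  case hsplit =>
    rw [show k + l' = l' + k from by omega, bWord_split, wordProd_append]
  case hW1 =>
    have hw : ∀ x ∈ rWord l' (bWord k), 1 ≤ x ∧ x + 1 ≤ k + l' + 1 := by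
      intro x hx
      simp only [rWord, List.mem_map] at hx
      obtain ⟨y, hy, rfl⟩ := hx
      have := mem_bWord hy
      omega
    rw [bConjWord h (m := k + l' + 1) (by omega) hw]
    congr 2
    rw [rWord, rWord, List.map_map]
    refine List.map_congr_left (fun x hx => ?_)
    simp only [Function.comp_apply]
    omega

/-! Lemma A : β_{k+l} = r_l(β_k) β_l t_{k,l} -/

lemma lemA {n : ℕ} {σ : ℕ → G} (h : IsBraidRep n σ) :
    ∀ k l : ℕ, 1 ≤ l → k + l ≤ n →
    wordProd σ (betaWord (k + l)) =
      wordProd σ (rWord l (betaWord k)) * wordProd σ (betaWord l) *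
        wordProd σ (tWord k l) := by
  intro k
  induction k with
  | zero =>
    intro l hl hn
    simp [betaWord, rWord, tWord]
  | succ k ih =>
    intro l hl hkl
    obtain ⟨l', rfl⟩ : ∃ l', l = l' + 1 := ⟨l - 1, by omega⟩
    have IH := ih (l' + 1) (by omega) (by omega)
    rw [show k + (l' + 1) = k + l' + 1 from by omega] at IH
    rw [show k + 1 + (l' + 1) = k + l' + 1 + 1 from by omega]
    have e2 : betaWord (k + l' + 1 + 1) = bWord (k + l' + 1) ++ betaWord (k + l' + 1) := rfl
    have e3 : rWord (l' + 1) (betaWord (k + 1)) =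
        rWord (l' + 1) (bWord k) ++ rWord (l' + 1) (betaWord k) := by
      show rWord (l' + 1) (bWord k ++ betaWord k) = _
      rw [rWord_append]
    have e4 : tWord (k + 1) (l' + 1) =
        tWord k (l' + 1) ++ rWord k ((bWord (l' + 1)).reverse) := rfl
    rw [e2, e3, e4, wordProd_append, wordProd_append, wordProd_append]
    rw [keyStep h k l' (by omega), IH]
    group


/-! flip computations needed for lemma B -/

/-- `β_{k+l} · r_l(β_k) · β_{k+l}⁻¹ = β_k`. -/
lemma flip_shift_beta {n : ℕ} {σ : ℕ → G} (h : IsBraidRep n σ) (k l : ℕ)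
    (hn : k + l ≤ n) :
    wordProd σ (betaWord (k + l)) * wordProd σ (rWord l (betaWord k)) =
      wordProd σ (betaWord k) * wordProd σ (betaWord (k + l)) := by
  have hw : ∀ x ∈ rWord l (betaWord k), 1 ≤ x ∧ x + 1 ≤ k + l := by
    intro x hx
    simp only [rWord, List.mem_map] at hx
    obtain ⟨y, hy, rfl⟩ := hx
    have := mem_betaWord hy
    omega
  rw [betaConjWord h (m := k + l) hn hw]
  congr 1
  have e1 : (rWord l (betaWord k)).map (fun x => k + l - x) =
      (betaWord k).map (fun y => k - y) := by
    rw [rWord, List.map_map]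
    refine List.map_congr_left (fun y _ => ?_)
    simp only [Function.comp_apply]
    omega
  rw [e1]
  -- wordProd σ ((betaWord k).map (k - ·)) = wordProd σ (betaWord k)
  have h2 := betaConjWord h (m := k) (by omega) (fun x hx => mem_betaWord hx)
    (w := betaWord k)
  exact mul_right_cancel h2.symm

/-- `β_{k+l} · β_l · β_{k+l}⁻¹ = r_k(β_l)`. -/
lemma flip_beta {n : ℕ} {σ : ℕ → G} (h : IsBraidRep n σ) (k l : ℕ)
    (hn : k + l ≤ n) :
    wordProd σ (betaWord (k + l)) * wordProd σ (betaWord l) =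
      wordProd σ (rWord k (betaWord l)) * wordProd σ (betaWord (k + l)) := by
  have hw : ∀ x ∈ betaWord l, 1 ≤ x ∧ x + 1 ≤ k + l := by
    intro x hx
    have := mem_betaWord hx
    omega
  rw [betaConjWord h (m := k + l) hn hw]
  congr 1
  have e1 : (betaWord l).map (fun x => k + l - x) =
      rWord k ((betaWord l).map (fun y => l - y)) := by
    rw [rWord, List.map_map]
    refine List.map_congr_left (fun y hy => ?_)
    have := mem_betaWord hy
    simp only [Function.comp_apply]
    omega
  rw [e1]
  -- shifted representation
  have hsh := isBraidRep_shift h k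
  have h2 := betaConjWord hsh (m := l) (by omega) (fun x hx => mem_betaWord hx)
    (w := betaWord l)
  have h3 : wordProd (fun i => σ (i + k)) ((betaWord l).map (fun y => l - y)) =
      wordProd (fun i => σ (i + k)) (betaWord l) := mul_right_cancel h2.symm
  rw [wordProd_rWord, wordProd_rWord]
  exact h3

/-- `β_k` and `r_k(β_l)` commute. -/
lemma beta_comm {n : ℕ} {σ : ℕ → G} (h : IsBraidRep n σ) (k l : ℕ)
    (hn : k + l ≤ n) :
    wordProd σ (betaWord k) * wordProd σ (rWord k (betaWord l)) =
      wordProd σ (rWord k (betaWord l)) * wordProd σ (betaWord k) := by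
  refine commProd (fun x hx y hy => ?_)
  have hxb := mem_betaWord hx
  simp only [rWord, List.mem_map] at hy
  obtain ⟨z, hz, rfl⟩ := hy
  have hzb := mem_betaWord hz
  exact h.2 x (z + k) (by omega) (by omega) (by omega)

/-! Lemma B : β_{k+l} = t_{l,k} r_l(β_k) β_l -/

lemma lemB {n : ℕ} {σ : ℕ → G} (h : IsBraidRep n σ) (k l : ℕ) (hk : 1 ≤ k)
    (hn : k + l ≤ n) :
    wordProd σ (betaWord (k + l)) =
      wordProd σ (tWord l k) * wordProd σ (rWord l (betaWord k)) *
        wordProd σ (betaWord l) := by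
  have hA := lemA h l k hk (by omega)
  rw [show l + k = k + l from by omega] at hA
  -- hA : β_{k+l} = r_k(β_l) * β_k * t_{l,k}
  have hT : wordProd σ (tWord l k) =
      (wordProd σ (betaWord k))⁻¹ * (wordProd σ (rWord k (betaWord l)))⁻¹ *
        wordProd σ (betaWord (k + l)) := by
    rw [hA]; group
  have hφ1 := flip_shift_beta h k l hn
  have hφ2 := flip_beta h k l hn
  have hc := beta_comm h k l hn
  rw [hT]
  symm
  calc (wordProd σ (betaWord k))⁻¹ * (wordProd σ (rWord k (betaWord l)))⁻¹ *
        wordProd σ (betaWord (k + l)) * wordProd σ (rWord l (betaWord k)) *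
        wordProd σ (betaWord l)
      = (wordProd σ (betaWord k))⁻¹ * (wordProd σ (rWord k (betaWord l)))⁻¹ *
          (wordProd σ (betaWord (k + l)) * wordProd σ (rWord l (betaWord k))) *
          wordProd σ (betaWord l) := by group
    _ = (wordProd σ (betaWord k))⁻¹ * (wordProd σ (rWord k (betaWord l)))⁻¹ *
          (wordProd σ (betaWord k) * wordProd σ (betaWord (k + l))) *
          wordProd σ (betaWord l) := by rw [hφ1]
    _ = (wordProd σ (betaWord k))⁻¹ * (wordProd σ (rWord k (betaWord l)))⁻¹ *
          wordProd σ (betaWord k) *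
          (wordProd σ (betaWord (k + l)) * wordProd σ (betaWord l)) := by group
    _ = (wordProd σ (betaWord k))⁻¹ * (wordProd σ (rWord k (betaWord l)))⁻¹ *
          wordProd σ (betaWord k) *
          (wordProd σ (rWord k (betaWord l)) * wordProd σ (betaWord (k + l))) := by
        rw [hφ2]
    _ = (wordProd σ (betaWord k))⁻¹ *
          ((wordProd σ (rWord k (betaWord l)))⁻¹ *
            (wordProd σ (betaWord k) * wordProd σ (rWord k (betaWord l)))) *
          wordProd σ (betaWord (k + l)) := by group
    _ = (wordProd σ (betaWord k))⁻¹ *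
          ((wordProd σ (rWord k (betaWord l)))⁻¹ *
            (wordProd σ (rWord k (betaWord l)) * wordProd σ (betaWord k))) *
          wordProd σ (betaWord (k + l)) := by rw [hc]
    _ = wordProd σ (betaWord (k + l)) := by group

/-- `r_l(β_k)` and `β_l` commute. -/
lemma beta_comm' {n : ℕ} {σ : ℕ → G} (h : IsBraidRep n σ) (k l : ℕ)
    (hn : k + l ≤ n) :
    wordProd σ (rWord l (betaWord k)) * wordProd σ (betaWord l) =
      wordProd σ (betaWord l) * wordProd σ (rWord l (betaWord k)) := by
  refine commProd (fun x hx y hy => ?_)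
  simp only [rWord, List.mem_map] at hx
  obtain ⟨z, hz, rfl⟩ := hx
  have hzb := mem_betaWord hz
  have hyb := mem_betaWord hy
  exact (h.2 y (z + l) (by omega) (by omega) (by omega)).symm

/-- Let `k, l ≥ 1` with `n = k + l ≥ 2`.  In the braid group `B_n`, the square of the
superselection braid satisfies `β_n² = t_{l,k} ⬝ r_l(β_k)² ⬝ β_l² ⬝ t_{k,l}`, where
moreover `r_l(β_k)²` and `β_l²` commute. -/
theorem beta_sq_factorization (k l n : ℕ) (hk : 1 ≤ k) (hl : 1 ≤ l) (hn : n = k + l)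
    (hn2 : 2 ≤ n) (σ : ℕ → G) (h : IsBraidRep n σ) :
    (wordProd σ (betaWord n) * wordProd σ (betaWord n) =
      wordProd σ (tWord l k) *
        (wordProd σ (rWord l (betaWord k)) * wordProd σ (rWord l (betaWord k))) *
        (wordProd σ (betaWord l) * wordProd σ (betaWord l)) *
        wordProd σ (tWord k l)) ∧
    (wordProd σ (rWord l (betaWord k)) * wordProd σ (rWord l (betaWord k))) *
        (wordProd σ (betaWord l) * wordProd σ (betaWord l)) =
      (wordProd σ (betaWord l) * wordProd σ (betaWord l)) *
        (wordProd σ (rWord l (betaWord k)) * wordProd σ (rWord l (betaWord k))) := by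
  subst hn
  have hc := beta_comm' h k l le_rfl
  constructor
  · have hA := lemA h k l hl le_rfl
    have hB := lemB h k l hk le_rfl
    have e : wordProd σ (betaWord (k + l)) * wordProd σ (betaWord (k + l)) =
        (wordProd σ (tWord l k) * wordProd σ (rWord l (betaWord k)) *
          wordProd σ (betaWord l)) *
        (wordProd σ (rWord l (betaWord k)) * wordProd σ (betaWord l) *
          wordProd σ (tWord k l)) := by
      rw [← hA, ← hB]
    rw [e]
    have hc' : wordProd σ (betaWord l) * wordProd σ (rWord l (betaWord k)) =
        wordProd σ (rWord l (betaWord k)) * wordProd σ (betaWord l) := hc.symm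
    calc (wordProd σ (tWord l k) * wordProd σ (rWord l (betaWord k)) *
          wordProd σ (betaWord l)) *
        (wordProd σ (rWord l (betaWord k)) * wordProd σ (betaWord l) *
          wordProd σ (tWord k l))
        = wordProd σ (tWord l k) * wordProd σ (rWord l (betaWord k)) *
            (wordProd σ (betaWord l) * wordProd σ (rWord l (betaWord k))) *
            (wordProd σ (betaWord l) * wordProd σ (tWord k l)) := by group
      _ = wordProd σ (tWord l k) * wordProd σ (rWord l (betaWord k)) *
            (wordProd σ (rWord l (betaWord k)) * wordProd σ (betaWord l)) *
            (wordProd σ (betaWord l) * wordProd σ (tWord k l)) := by rw [hc']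
      _ = wordProd σ (tWord l k) *
            (wordProd σ (rWord l (betaWord k)) * wordProd σ (rWord l (betaWord k))) *
            (wordProd σ (betaWord l) * wordProd σ (betaWord l)) *
            wordProd σ (tWord k l) := by group
  · have h1 : Commute (wordProd σ (rWord l (betaWord k))) (wordProd σ (betaWord l)) := hc
    exact (h1.mul_right h1).mul_left (h1.mul_right h1)

end Braid
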